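/- arXiv:hep-th/0403207 — 3 statements merged into one kernel-verified Lean document; each statement's English description precedes it below -/
import Mathlib

section
/- Let M = ℝ^4 with the relation x ≿ y defined by: x ≿ y iff x ∉ y + V̄⁻, where V̄⁻ = {z ∈ ℝ^4 : z₀² - z₁² - z₂² - z₃² ≥ 0 発 z₀ ≤ 0} is the closed past light cone (i.e., x ≿ y iff x is not in the past causal shadow of y). For n ≥ 2, N = {1,...,n}, and ∅ ⊊ I ⊊ N, define C_I = {x ∈ M^n : x_i ≿ x_j for all i ∈ I, j ∈ N \ I}. Then ⋃_{∅ ⊊ I ⊊ N} C_I = M^n \ Δ_n, where Δ_n = {x ∈ M^n : x₁ = ... = x_n} is the thin diagonal. -/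
open Pointwise

/-- The Minkowski quadratic form on `M = ℝ^{1,3}`. -/
def minkowskiQ (z : Fin 4 → ℝ) : ℝ := z 0 ^ 2 - z 1 ^ 2 - z 2 ^ 2 - z 3 ^ 2

/-- The closed past light cone `V̄⁻` in `ℝ^{1,3}`. -/
def pastCone : Set (Fin 4 → ℝ) := {z | 0 ≤ minkowskiQ z ∧ z 0 ≤ 0}

/-- `x ≿ y` iff `x ∉ y + V̄⁻`, i.e. `x` is not in the past causal shadow of `y`. -/
def notPastShadow (x y : Fin 4 → ℝ) : Prop := x ∉ ({y} : Set (Fin 4 → ℝ)) + pastCone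

/-- `C_I = {x ∈ M^n : x_i ≿ x_j for all i ∈ I, j ∈ N \ I}`. -/
def causalSet (n : ℕ) (I : Finset (Fin n)) : Set (Fin n → (Fin 4 → ℝ)) :=
  {x | ∀ i ∈ I, ∀ j ∉ I, notPastShadow (x i) (x j)}

lemma notPastShadow_iff (x y : Fin 4 → ℝ) :
    notPastShadow x y ↔ ¬ (0 ≤ minkowskiQ (x - y) ∧ (x - y) 0 ≤ 0) := by
  unfold notPastShadow pastCone
  rw [Set.singleton_add]
  constructor
  · intro h hc
    exact h ⟨x - y, hc, by module⟩
  · rintro h ⟨z, hz, hzx⟩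
    exact h (by simpa [← hzx, add_sub_cancel_left] using hz)

/-- The geometric lemma: the sets `C_I` for `∅ ⊊ I ⊊ N` cover exactly the complement
of the thin diagonal `Δ_n` in `M^n`. -/
theorem stmt_0 (n : ℕ) (hn : 2 ≤ n) :
    (⋃ (I : Finset (Fin n)) (_ : I.Nonempty) (_ : I ≠ Finset.univ), causalSet n I)
      = {x : Fin n → (Fin 4 → ℝ) | ¬ ∀ i j, x i = x j} := by
  have npos : 0 < n := by omega
  ext x
  simp only [Set.mem_iUnion, Set.mem_setOf_eq]
  constructor
  · rintro ⟨I, ⟨i, hi⟩, hIne, hC⟩ hall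
    obtain ⟨j, hj⟩ : ∃ j, j ∉ I := by
      by_contra h
      push_neg at h
      exact hIne (Finset.eq_univ_iff_forall.2 h)
    have := (notPastShadow_iff _ _).1 (hC i hi j hj)
    apply this
    rw [hall i j]
    simp [minkowskiQ]
  · intro hx
    by_cases hT : ∀ i j, (x i) 0 = (x j) 0
    · -- all time coordinates equal; separate by equality of points
      push_neg at hx
      obtain ⟨i, j, hij⟩ := hx
      refine ⟨Finset.univ.filter (fun k => x k = x i), ⟨i, by simp⟩, ?_, ?_⟩
      · intro h
        have : x j = x i := by
          have := Finset.eq_univ_iff_forall.1 h j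
          simpa using this
        exact hij this.symm
      · intro k hk l hl
        simp only [Finset.mem_filter, Finset.mem_univ, true_and] at hk hl
        rw [notPastShadow_iff]
        rintro ⟨hQ, -⟩
        have h0 : (x k - x l) 0 = 0 := by
          simp [Pi.sub_apply, hT k l]
        apply hl
        rw [← hk]
        symm
        rw [← sub_eq_zero]
        have h1 : (x k - x l) 1 = 0 ∧ (x k - x l) 2 = 0 ∧ (x k - x l) 3 = 0 := by
          unfold minkowskiQ at hQ
          rw [h0] at hQ
          refine ⟨?_, ?_, ?_⟩ <;>
            nlinarith [sq_nonneg ((x k - x l) 1), sq_nonneg ((x k - x l) 2),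
              sq_nonneg ((x k - x l) 3)]
        funext t
        fin_cases t
        · exact h0
        · exact h1.1
        · exact h1.2.1
        · exact h1.2.2
    · -- time coordinates differ: take the maximizers of the time coordinate
      push_neg at hT
      obtain ⟨a, b, hab⟩ := hT
      obtain ⟨i₀, -, hmax⟩ := Finset.exists_max_image Finset.univ (fun k => (x k) 0)
        ⟨a, Finset.mem_univ a⟩
      simp only [Finset.mem_univ, forall_true_left] at hmax
      refine ⟨Finset.univ.filter (fun k => (x k) 0 = (x i₀) 0), ⟨i₀, by simp⟩, ?_, ?_⟩
      · intro h
        have hall : ∀ k, (x k) 0 = (x i₀) 0 := fun k => by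
          have := Finset.eq_univ_iff_forall.1 h k
          simpa using this
        exact hab ((hall a).trans (hall b).symm)
      · intro k hk l hl
        simp only [Finset.mem_filter, Finset.mem_univ, true_and] at hk hl
        rw [notPastShadow_iff]
        rintro ⟨-, h0⟩
        have : (x l) 0 < (x i₀) 0 := lt_of_le_of_ne (hmax l) hl
        rw [Pi.sub_apply] at h0
        linarith [hk ▸ h0]
end

section
/- Let H be a connected graded commutative Hopf algebra, V a commutative unital algebra, Φ : H → V an algebra homomorphism, and R : V → V an idempotent algebra endomorphism (hence a Rota-Baxter operator of weight −1, i.e., R(a)R(b) = R(R(a)b + aR(b) − ab)). Define S_R^Φ recursively by S_R^Φ(𝟙) = 𝟙 and S_R^Φ(x) = −R(Φ(x) + Σ S_R^Φ(x')Φ(x'')) for x in the augmentation ideal, where Δ(x) = x⊗𝟙 + 𝟙⊗x + Σ x'⊗x''. Then S_R^Φ is an algebra homomorphism, and so is S_R^Φ ⋆ Φ. -/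
/-!
For connected graded `H`, `Δ x - x ⊗ 1` lies in (lower degrees) ⊗ `H` whenever `x` is homogeneous,
so the recursion determines the twisted antipode by induction on the degree. Because `R` is an
idempotent algebra map, `R ∘ Φ ∘ S_H` (with `S_H` the antipode of `H`) satisfies the recursion,
hence is the twisted antipode; it is a composite of algebra maps since `H` is commutative. Then
`S ⋆ Φ` is the convolution of two algebra maps into a commutative algebra, again an algebra map.
-/

open TensorProduct LinearMap Coalgebra

section TensorIncl

variable {R M N : Type*} [CommSemiring R] [AddCommMonoid M] [Module R M]
  [AddCommMonoid N] [Module R N]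

theorem TensorProduct.range_mapIncl_le {p : Submodule R M} {q : Submodule R N}
    {P : Submodule R (M ⊗[R] N)} (h : ∀ m ∈ p, ∀ n ∈ q, m ⊗ₜ[R] n ∈ P) :
    range (mapIncl p q) ≤ P := by
  rw [range_mapIncl, Submodule.map₂_le]
  exact h

end TensorIncl

section Graded

variable {k H : Type*} [CommRing k] [Ring H] [Bialgebra k H]
  (ℬ : ℕ → Submodule k H) [GradedAlgebra ℬ]

theorem comul_sub_tmul_one_mem (hconn : ℬ 0 = Submodule.span k {1})
    (hgradedΔ : ∀ (n : ℕ), ∀ x ∈ ℬ n,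
      comul (R := k) x ∈
        ⨆ (p : ℕ × ℕ) (_ : p.1 + p.2 = n), range (mapIncl (ℬ p.1) (ℬ p.2)))
    {n : ℕ} {x : H} (hx : x ∈ ℬ n) :
    comul (R := k) x - x ⊗ₜ[k] 1 ∈ range (mapIncl (⨆ m < n, ℬ m) ⊤) := by
  set K := range (mapIncl (⨆ m < n, ℬ m) (⊤ : Submodule k H))
  have hsplit : (⨆ (p : ℕ × ℕ) (_ : p.1 + p.2 = n), range (mapIncl (ℬ p.1) (ℬ p.2))) ≤
      K ⊔ (ℬ n).map ((mk k H H).flip 1) := by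
    refine iSup₂_le fun p hp => ?_
    rcases Nat.lt_or_ge p.1 n with hlt | hge
    · exact le_sup_of_le_left
        (range_mapIncl_mono (le_iSup₂_of_le p.1 hlt le_rfl) le_top)
    · obtain ⟨p1, p2⟩ := p
      obtain ⟨rfl, rfl⟩ : p1 = n ∧ p2 = 0 := by simp only at hp hge; omega
      rw [range_mapIncl, hconn, Submodule.map₂_span_singleton_eq_map_flip]
      exact le_sup_right
  obtain ⟨u, hu, v, ⟨z, hz, rfl⟩, huv⟩ := Submodule.mem_sup.mp (hsplit (hgradedΔ n x hx))
  simp only [flip_apply, mk_apply] at huv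
  -- `id ⊗ ε` recovers `x` from `Δ x`, and sends `K` into the lower degrees.
  set g : H ⊗[k] H →ₗ[k] H := (TensorProduct.rid k H).toLinearMap ∘ₗ lTensor H counit
  have hgu : g u ∈ ⨆ m < n, ℬ m := by
    refine range_mapIncl_le (P := (⨆ m < n, ℬ m).comap g) (fun a ha b _ => ?_) hu
    simpa [g] using Submodule.smul_mem _ _ ha
  have hxz : x - z = g u := by
    have h := congrArg g huv
    simp only [g, LinearMap.comp_apply, lTensor_counit_comul, map_add, lTensor_tmul,
      LinearEquiv.coe_coe, TensorProduct.rid_tmul, Bialgebra.counit_one, one_smul] at h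
    rw [← h, add_sub_cancel_right]; rfl
  have hdisj : Disjoint (ℬ n) (⨆ m < n, ℬ m) :=
    ((DirectSum.Decomposition.isInternal ℬ).submodule_iSupIndep n).mono_right
      (iSup₂_le fun m hm => le_iSup₂_of_le m hm.ne le_rfl)
  have : x = z := sub_eq_zero.mp (hdisj.le_bot ⟨sub_mem hx hz, hxz ▸ hgu⟩)
  rw [← huv, this, add_sub_cancel_right]
  exact hu

variable {V : Type*} [Ring V] [Algebra k V]

theorem eq_zero_of_eq_neg_comp_comul_sub (hconn : ℬ 0 = Submodule.span k {1})
    (hgradedΔ : ∀ (n : ℕ), ∀ x ∈ ℬ n,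
      comul (R := k) x ∈
        ⨆ (p : ℕ × ℕ) (_ : p.1 + p.2 = n), range (mapIncl (ℬ p.1) (ℬ p.2)))
    (Φ : H →ₗ[k] V) (L : V →ₗ[k] V) {D : H →ₗ[k] V}
    (hD : ∀ x, D x = -L (mul' k V (map D Φ (comul x - x ⊗ₜ[k] 1)))) :
    D = 0 := by
  have hdeg : ∀ n, ℬ n ≤ ker D := by
    intro n
    induction n using Nat.strong_induction_on with
    | _ n ih =>
      have hlow : range (mapIncl (⨆ m < n, ℬ m) ⊤) ≤ ker (mul' k V ∘ₗ map D Φ) :=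
        range_mapIncl_le fun a ha b _ => by
          simp [mem_ker.mp (iSup₂_le ih ha)]
      intro x hx
      have h0 := hlow (comul_sub_tmul_one_mem ℬ hconn hgradedΔ hx)
      rw [mem_ker, comp_apply] at h0
      rw [mem_ker, hD x, h0, map_zero, neg_zero]
  rw [← ker_eq_top, eq_top_iff, ← (DirectSum.Decomposition.isInternal ℬ).submodule_iSup_eq_top]
  exact iSup_le hdeg

end Graded

section TwistedAntipode

variable {k H V : Type*} [CommRing k] [Ring H] [Ring V] [Algebra k V]

def IsTwistedAntipode [Bialgebra k H] (Φ : H →ₗ[k] V) (L : V →ₗ[k] V) (S : H →ₗ[k] V) : Prop :=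
  S 1 = 1 ∧ ∀ x : H, counit (R := k) x = 0 →
    S x = -L (mul' k V (map S Φ (comul x - x ⊗ₜ[k] 1)))

namespace IsTwistedAntipode

variable [Bialgebra k H] {Φ : H →ₗ[k] V} {L : V →ₗ[k] V} {S T : H →ₗ[k] V}

theorem sub (hS : IsTwistedAntipode Φ L S) (hT : IsTwistedAntipode Φ L T) (x : H) :
    (S - T) x = -L (mul' k V (map (S - T) Φ (comul x - x ⊗ₜ[k] 1))) := by
  set y := x - counit (R := k) x • 1
  have hy : counit (R := k) y = 0 := by simp [y]
  have hΔy : comul (R := k) y - y ⊗ₜ[k] 1 = comul x - x ⊗ₜ[k] 1 := by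
    simp only [y, map_sub, map_smul, Bialgebra.comul_one, Algebra.TensorProduct.one_def,
      sub_tmul, smul_tmul']
    abel
  have hSy := hS.2 y hy
  have hTy := hT.2 y hy
  rw [hΔy] at hSy hTy
  have hmap : map S Φ = map (S - T) Φ + map T Φ := by
    rw [← map_add_left, sub_add_cancel]
  calc (S - T) x = S y - T y := by simp [y, hS.1, hT.1]
    _ = _ := by rw [hSy, hTy, hmap, LinearMap.add_apply, map_add, map_add]; abel

theorem unique (ℬ : ℕ → Submodule k H) [GradedAlgebra ℬ] (hconn : ℬ 0 = Submodule.span k {1})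
    (hgradedΔ : ∀ (n : ℕ), ∀ x ∈ ℬ n,
      comul (R := k) x ∈
        ⨆ (p : ℕ × ℕ) (_ : p.1 + p.2 = n), range (mapIncl (ℬ p.1) (ℬ p.2)))
    (hS : IsTwistedAntipode Φ L S) (hT : IsTwistedAntipode Φ L T) : S = T :=
  sub_eq_zero.mp (eq_zero_of_eq_neg_comp_comul_sub ℬ hconn hgradedΔ Φ L (hS.sub hT))

end IsTwistedAntipode

/-- Multiplicativity and idempotence of `R` let the outer `R` absorb the inner one, and what
remains is `R ∘ Φ` of the antipode identity `Σ S(x') x'' = ε(x) 1`. -/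
theorem isTwistedAntipode_comp_antipode [HopfAlgebra k H] (Φ : H →ₐ[k] V) (R : V →ₐ[k] V)
    (hR : R.comp R = R) :
    IsTwistedAntipode Φ.toLinearMap R.toLinearMap
      ((R.comp Φ).toLinearMap ∘ₗ HopfAlgebra.antipode k) := by
  set T := (R.comp Φ).toLinearMap ∘ₗ HopfAlgebra.antipode k
  have hRR : ∀ v, R (R v) = R v := AlgHom.congr_fun hR
  have hR_conv : ∀ w : H ⊗[k] H, R (mul' k V (map T Φ.toLinearMap w)) =
      R (Φ (mul' k H (rTensor H (HopfAlgebra.antipode k) w))) := by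
    intro w
    induction w using TensorProduct.induction_on with
    | zero => simp
    | tmul a b => simp [T, hRR]
    | add a b ha hb => simp only [map_add, ha, hb]
  refine ⟨by simp [T], fun x hx => ?_⟩
  rw [AlgHom.toLinearMap_apply, hR_conv, map_sub, map_sub,
    HopfAlgebra.mul_antipode_rTensor_comul_apply, hx]
  simp [T]

end TwistedAntipode

open WithConv in
theorem AlgHom.mul'_map_comul_eq_convMul {k C A : Type*} [CommRing k] [Semiring C] [Bialgebra k C]
    [CommSemiring A] [Algebra k A] (f g : C →ₐ[k] A) (x : C) :
    mul' k A (map f.toLinearMap g.toLinearMap (comul x)) = (toConv f * toConv g).ofConv x := rfl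

/-- Let `H` be a connected graded commutative Hopf algebra, `V` a commutative unital
algebra, `Φ : H → V` an algebra homomorphism, and `R : V → V` an idempotent algebra
endomorphism (hence a Rota-Baxter operator). Let `S` be the twisted antipode:
`S(𝟙) = 𝟙` and `S(x) = −R(Φ(x) + Σ S(x')Φ(x''))` for `x` in the augmentation ideal,
where `Δ(x) = x ⊗ 𝟙 + 𝟙 ⊗ x + Σ x' ⊗ x''` (equivalently
`S(x) = −R(m_V((S ⊗ Φ)(Δ(x) − x ⊗ 𝟙)))`). Then `S` is an algebra homomorphism, and
so is the convolution `S ⋆ Φ`. -/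
theorem stmt_15 {k H V : Type} [Field k] [CommRing H] [HopfAlgebra k H]
    [CommRing V] [Algebra k V]
    (ℬ : ℕ → Submodule k H) [GradedAlgebra ℬ]
    (hconn : ℬ 0 = Submodule.span k {1})
    (hgradedΔ : ∀ (n : ℕ), ∀ x ∈ ℬ n,
      Coalgebra.comul (R := k) x ∈
        ⨆ (p : ℕ × ℕ) (_ : p.1 + p.2 = n),
          LinearMap.range (TensorProduct.mapIncl (ℬ p.1) (ℬ p.2)))
    (Φ : H →ₐ[k] V) (Ren : V →ₐ[k] V) (hRen : Ren.comp Ren = Ren)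
    (S : H →ₗ[k] V) (hS1 : S 1 = 1)
    (hS : ∀ x : H, Coalgebra.counit (R := k) x = 0 →
      S x = - Ren (LinearMap.mul' k V
        (TensorProduct.map S Φ.toLinearMap (Coalgebra.comul x - x ⊗ₜ[k] 1)))) :
    (∀ a b : H, S (a * b) = S a * S b) ∧
    (∀ a b : H,
      LinearMap.mul' k V (TensorProduct.map S Φ.toLinearMap
          (Coalgebra.comul (a * b))) =
        LinearMap.mul' k V (TensorProduct.map S Φ.toLinearMap (Coalgebra.comul a)) *
        LinearMap.mul' k V (TensorProduct.map S Φ.toLinearMap (Coalgebra.comul b))) ∧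
    LinearMap.mul' k V (TensorProduct.map S Φ.toLinearMap
        (Coalgebra.comul (1 : H))) = 1 := by
  set SAlg := (Ren.comp Φ).comp (HopfAlgebra.antipodeAlgHom k H)
  have hSAlg : S = SAlg.toLinearMap :=
    IsTwistedAntipode.unique ℬ hconn hgradedΔ ⟨hS1, hS⟩
      (isTwistedAntipode_comp_antipode Φ Ren hRen)
  subst hSAlg
  simp only [AlgHom.mul'_map_comul_eq_convMul]
  exact ⟨map_mul SAlg, map_mul _, map_one _⟩
end

section
/- Let H be a bialgebra with a Hochschild 1-cocycle B₊ (so Δ B₊ = (id ⊗ B₊)Δ + B₊ ⊗ 𝟙), let P = id − 𝟙ε, and let Q : H⊗H → H⊗H be Q = id ⊗ P away from k𝟙⊗k𝟙 with Q(𝟙⊗𝟙) = −𝟙⊗𝟙. Then Q ∘ (id ⊗ B₊) ∘ Δ = (id ⊗ B₊) ∘ Δ and Q ∘ (B₊ ⊗ 𝟙) = 0 on the augmentation ideal, so that Q ∘ Δ ∘ B₊ = (id ⊗ B₊) ∘ Δ on ker ε. -/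
open TensorProduct

variable {k H : Type} [Field k] [Ring H] [Bialgebra k H]

/-- `E = 𝟙ε : H → H`. -/
noncomputable def unitCounit (k H : Type) [Field k] [Ring H] [Bialgebra k H] :
    H →ₗ[k] H :=
  Algebra.linearMap k H ∘ₗ Coalgebra.counit

/-- The projection `P = id − 𝟙ε` onto the augmentation ideal. -/
noncomputable def augProj (k H : Type) [Field k] [Ring H] [Bialgebra k H] :
    H →ₗ[k] H :=
  LinearMap.id - unitCounit k H

/-- The map `Q : H ⊗ H → H ⊗ H`, equal to `id ⊗ P` away from `k𝟙 ⊗ k𝟙` and sending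
`𝟙 ⊗ 𝟙` to `−𝟙 ⊗ 𝟙`. -/
noncomputable def Qmap (k H : Type) [Field k] [Ring H] [Bialgebra k H] :
    H ⊗[k] H →ₗ[k] H ⊗[k] H :=
  LinearMap.lTensor H (augProj k H) -
    TensorProduct.map (unitCounit k H) (unitCounit k H)

lemma Q_lTensor_Bp (Bp : H →ₗ[k] H) (hBe : ∀ x : H, Coalgebra.counit (R := k) (Bp x) = 0)
    (t : H ⊗[k] H) : Qmap k H (LinearMap.lTensor H Bp t) = LinearMap.lTensor H Bp t := by
  induction t using TensorProduct.induction_on with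
  | zero => simp
  | tmul a b =>
      simp [Qmap, unitCounit, augProj, hBe, LinearMap.sub_apply, sub_tmul, tmul_sub]
  | add x y hx hy => simp only [map_add, hx, hy]

/-- Let `B₊` be a Hochschild 1-cocycle with image in `ker ε`. Then
`Q ∘ (id ⊗ B₊) ∘ Δ = (id ⊗ B₊) ∘ Δ`, `Q ∘ (B₊ ⊗ 𝟙) = 0` on the augmentation ideal, and
hence `Q ∘ Δ ∘ B₊ = (id ⊗ B₊) ∘ Δ` on `ker ε`. -/
theorem stmt_18 (Bp : H →ₗ[k] H)
    (hB : ∀ x : H, Coalgebra.comul (R := k) (Bp x) =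
      TensorProduct.map LinearMap.id Bp (Coalgebra.comul x) + Bp x ⊗ₜ[k] 1)
    (hBe : ∀ x : H, Coalgebra.counit (R := k) (Bp x) = 0) :
    (∀ x : H, Qmap k H (LinearMap.lTensor H Bp (Coalgebra.comul x)) =
        LinearMap.lTensor H Bp (Coalgebra.comul x)) ∧
    (∀ x : H, Coalgebra.counit (R := k) x = 0 → Qmap k H (Bp x ⊗ₜ[k] 1) = 0) ∧
    (∀ x : H, Coalgebra.counit (R := k) x = 0 →
      Qmap k H (Coalgebra.comul (Bp x)) =
        LinearMap.lTensor H Bp (Coalgebra.comul x)) := by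
  have hQ0 : ∀ x : H, Qmap k H (Bp x ⊗ₜ[k] 1) = 0 := by
    intro x
    simp [Qmap, unitCounit, augProj, hBe, LinearMap.sub_apply, sub_tmul, tmul_sub]
  refine ⟨fun x => Q_lTensor_Bp Bp hBe _, fun x _ => hQ0 x, fun x _ => ?_⟩
  have : TensorProduct.map (LinearMap.id : H →ₗ[k] H) Bp = LinearMap.lTensor H Bp := rfl
  rw [hB, map_add, this, Q_lTensor_Bp Bp hBe, hQ0, add_zero]
end
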